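/- For S ⊆ {0,1}^r and C = cuboid(S), let y ∈ R_{≥0}^C and define α ∈ R_{≥0}^S by α_p = (1/2) y_{C_p} where C_p is the member corresponding to p. Then y is a fractional packing of C of value two (i.e., Σ_C y_C = 2 and for every element v of the ground set, Σ(y_C : v ∈ C) ≤ 1) if and only if Σ_{p∈S} α_p = 1 and Σ_{p∈S} α_p · p = (1/2)·1. In particular, cuboid(S) has a fractional packing of value two if and only if (1/2)·1 ∈ conv(S). -/

import Mathlib

/-!
Write `y(i, b)` for the weight a packing `y` puts on the element `(i, b)` of the ground set.
The two elements `(i, 0)` and `(i, 1)` partition the members, so `y(i, 0) + y(i, 1)` is the total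
value. If that value is `2`, the constraints `y(i, b) ≤ 1` force `y(i, 1) = 1`, which is the
`i`-th coordinate equation `∑ₚ (y_p / 2) pᵢ = 1/2`. Hence fractional packings of value two are
exactly twice the convex combinations of `S` representing `(1/2)·𝟏`.
-/

/-- The member of `cuboid(S)` corresponding to a point `p ∈ {0,1}^r`. The ground set is
`Fin r × ZMod 2`, where `(i, 1)` stands for coordinate `2i-1` and `(i, 0)` for `2i`; the
member of `p` has incidence vector `(p₁, 1-p₁, …, p_r, 1-p_r)`, i.e. it consists of the
elements `(i, p i)`. -/
def cuboidMemb {r : ℕ} (p : Fin r → ZMod 2) : Finset (Fin r × ZMod 2) :=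
  Finset.univ.filter (fun e => p e.1 = e.2)

open Finset

lemma ZMod.two_eq_zero_or_eq_one (a : ZMod 2) : a = 0 ∨ a = 1 := by
  decide +revert

section CoordinateLoads

variable {ι : Type*} (S : Finset ι) (y : ι → ℝ) (g : ι → ZMod 2)

lemma sum_filter_eq_one_eq_sum_mul_val :
    ∑ p ∈ S with g p = 1, y p = ∑ p ∈ S, y p * ((g p).val : ℝ) := by
  rw [sum_filter]
  refine sum_congr rfl fun p _ => ?_
  rcases (g p).two_eq_zero_or_eq_one with h | h <;> simp [h, ZMod.val_one]

lemma sum_filter_eq_zero_add_sum_filter_eq_one :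
    ∑ p ∈ S with g p = 0, y p + ∑ p ∈ S with g p = 1, y p = ∑ p ∈ S, y p := by
  rw [← sum_filter_add_sum_filter_not S (g · = 0)]
  congr 2 with p
  simp only [mem_filter, and_congr_right_iff]
  rcases (g p).two_eq_zero_or_eq_one with h | h <;> simp [h]

lemma forall_sum_filter_le_one_iff (htotal : ∑ p ∈ S, y p = 2) :
    (∀ b, ∑ p ∈ S with g p = b, y p ≤ 1) ↔ ∑ p ∈ S, y p * ((g p).val : ℝ) = 1 := by
  have hsplit := sum_filter_eq_zero_add_sum_filter_eq_one S y g
  rw [← sum_filter_eq_one_eq_sum_mul_val]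
  constructor
  · intro h
    linarith [h 0, h 1]
  · intro h b
    rcases b.two_eq_zero_or_eq_one with rfl | rfl <;> linarith

end CoordinateLoads

lemma cuboid_packing_value_two_iff {κ : Type*} (S : Finset (κ → ZMod 2))
    (y : (κ → ZMod 2) → ℝ) :
    ((∑ p ∈ S, y p) = 2 ∧
        ∀ v : κ × ZMod 2, (∑ p ∈ S.filter (fun p => p v.1 = v.2), y p) ≤ 1) ↔
      ((∑ p ∈ S, y p / 2) = 1 ∧ ∀ i, (∑ p ∈ S, (y p / 2) * ((p i).val : ℝ)) = 1 / 2) := by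
  have htotal : ∑ p ∈ S, y p / 2 = 1 ↔ ∑ p ∈ S, y p = 2 := by
    rw [← sum_div]
    constructor <;> intro <;> linarith
  have hcoord : ∀ i, ∑ p ∈ S, y p / 2 * ((p i).val : ℝ) = 1 / 2 ↔
      ∑ p ∈ S, y p * ((p i).val : ℝ) = 1 := fun i => by
    simp_rw [div_mul_eq_mul_div, ← sum_div]
    constructor <;> intro <;> linarith
  simp_rw [htotal, hcoord, Prod.forall]
  exact and_congr_right fun h => forall_congr' fun i => forall_sum_filter_le_one_iff S y (· i) h

lemma mem_convexHull_image_iff_of_injOn {R E ι : Type*} [Field R] [LinearOrder R]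
    [IsStrictOrderedRing R] [AddCommGroup E] [Module R E] {s : Finset ι} {f : ι → E}
    (hf : Set.InjOn f s) {x : E} :
    x ∈ convexHull R (f '' s) ↔
      ∃ w : ι → R, (∀ i ∈ s, 0 ≤ w i) ∧ ∑ i ∈ s, w i = 1 ∧ ∑ i ∈ s, w i • f i = x := by
  classical
  constructor
  · rw [← coe_image, mem_convexHull']
    rintro ⟨w, hw₀, hw₁, rfl⟩
    exact ⟨w ∘ f, fun i hi => hw₀ _ (mem_image_of_mem f hi), (sum_image hf).symm.trans hw₁,
      (sum_image (f := fun y => w y • y) hf).symm⟩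
  · rintro ⟨w, hw₀, hw₁, rfl⟩
    exact (convex_convexHull R _).sum_mem hw₀ hw₁
      fun i hi => subset_convexHull R _ (Set.mem_image_of_mem f hi)

lemma injective_cast_val {κ : Type*} :
    Function.Injective fun (p : κ → ZMod 2) (i : κ) => ((p i).val : ℝ) :=
  fun _ _ h => funext fun i => ZMod.val_injective 2 (Nat.cast_injective (congrFun h i))

/-- For `S ⊆ {0,1}^r` and `𝒞 = cuboid(S)` with `y ∈ ℝ₊^𝒞` (indexed by the
points `p ∈ S`, via the bijection `p ↦ C_p`), setting `α_p = y_p / 2`: `y` is a fractional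
packing of value two (total value `2`, and total weight at most `1` on each element of the
ground set) iff `Σ α_p = 1` and `Σ α_p · p = (1/2)·𝟏`. In particular, `cuboid(S)` has a
fractional packing of value two iff `(1/2)·𝟏 ∈ conv(S)`. -/
theorem cuboid_fractional_packing_iff_convex_combination (r : ℕ)
    (S : Finset (Fin r → ZMod 2)) :
    (∀ y : (Fin r → ZMod 2) → ℝ, (∀ p, 0 ≤ y p) →
      (((∑ p ∈ S, y p) = 2 ∧
          ∀ v : Fin r × ZMod 2, (∑ p ∈ S.filter (fun p => p v.1 = v.2), y p) ≤ 1) ↔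
        ((∑ p ∈ S, y p / 2) = 1 ∧
          ∀ i : Fin r, (∑ p ∈ S, (y p / 2) * ((p i).val : ℝ)) = 1 / 2))) ∧
    ((∃ y : (Fin r → ZMod 2) → ℝ, (∀ p, 0 ≤ y p) ∧ (∑ p ∈ S, y p) = 2 ∧
        ∀ v : Fin r × ZMod 2, (∑ p ∈ S.filter (fun p => p v.1 = v.2), y p) ≤ 1) ↔
      (fun _ : Fin r => (1 / 2 : ℝ)) ∈
        convexHull ℝ ((fun (p : Fin r → ZMod 2) (i : Fin r) => ((p i).val : ℝ)) '' ↑S)) := by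
  refine ⟨fun y _ => cuboid_packing_value_two_iff S y, ?_⟩
  rw [mem_convexHull_image_iff_of_injOn injective_cast_val.injOn]
  simp_rw [cuboid_packing_value_two_iff, funext_iff, Finset.sum_apply, Pi.smul_apply, smul_eq_mul]
  constructor
  · rintro ⟨y, hy, h⟩
    exact ⟨fun p => y p / 2, fun p _ => by linarith [hy p], h⟩
  · rintro ⟨w, hw, h⟩
    have hhalf : ∀ p ∈ S, 2 * max (w p) 0 / 2 = w p := fun p hp => by
      rw [max_eq_left (hw p hp)]
      ring
    refine ⟨fun p => 2 * max (w p) 0, fun p => by positivity, ?_, fun i => ?_⟩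
    · rw [sum_congr rfl hhalf, h.1]
    · rw [← h.2 i]
      exact sum_congr rfl fun p hp => by rw [hhalf p hp]
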